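/- Let S_P be the 4×4 matrix [[0,0,1,1],[0,1,1,0],[1,1,0,0],[1,0,0,1]]. Then there exist 3×3 real symmetric psd matrices A₁,...,A₄ and B₁,...,B₄ of rank one such that trace(A_iB_j) = (S_P)_{ij} for all i,j; explicitly A_i = v_iv_iᵀ with v₁=(1,1,1), v₂=(1,1,−1), v₃=(1,−1,−1), v₄=(1,−1,1), and B_j = ¼ w_jw_jᵀ with w₁=(1,−1,0), w₂=(1,0,−1), w₃=(1,1,0), w₄=(1,0,1). -/

import Mathlib

/-!
For rank-one matrices `tr (v vᵀ · w wᵀ) = (v ⬝ w)²`, so the factorization amounts to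
`v_i ⬝ w_j = 2 (S_P)_{ij}`: since `S_P` is a 0/1 matrix, `¼ (2 (S_P)_{ij})² = (S_P)_{ij}`.
-/

open Matrix

/-- The vertex vectors of the rank-one psd factorization of the slack matrix of the
square. -/
def sqV : Fin 4 → Fin 3 → ℝ := ![![1, 1, 1], ![1, 1, -1], ![1, -1, -1], ![1, -1, 1]]

/-- The facet vectors of the rank-one psd factorization of the slack matrix of the
square. -/
def sqW : Fin 4 → Fin 3 → ℝ := ![![1, -1, 0], ![1, 0, -1], ![1, 1, 0], ![1, 0, 1]]

namespace Matrix

variable {m n K : Type*}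

theorem rank_ne_zero_of_ne_zero [Field K] [Fintype m] [Fintype n] [DecidableEq n]
    {A : Matrix m n K} (hA : A ≠ 0) : A.rank ≠ 0 := by
  rw [rank, Ne, Submodule.finrank_eq_zero, LinearMap.range_eq_bot, ← toLin'_apply']
  exact (map_ne_zero_iff _ toLin'.injective).2 hA

theorem rank_vecMulVec_eq_one [Field K] [Fintype n] {v w : n → K} (hv : v ≠ 0) (hw : w ≠ 0) :
    (vecMulVec v w).rank = 1 := by
  classical
  exact le_antisymm (rank_vecMulVec_le v w)
    (Nat.one_le_iff_ne_zero.2 (rank_ne_zero_of_ne_zero (vecMulVec_ne_zero hv hw)))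

theorem posSemidef_vecMulVec_self {R : Type*} [CommRing R] [PartialOrder R] [StarRing R]
    [StarOrderedRing R] [TrivialStar R] [Fintype n] (v : n → R) :
    (vecMulVec v v).PosSemidef := by
  simpa using posSemidef_vecMulVec_self_star v

theorem trace_vecMulVec_self_mul_vecMulVec_self {R : Type*} [CommSemiring R] [Fintype n]
    (v w : n → R) : (vecMulVec v v * vecMulVec w w).trace = (v ⬝ᵥ w) ^ 2 := by
  rw [vecMulVec_mul_vecMulVec, trace_vecMulVec, dotProduct_smul, dotProduct_comm, smul_eq_mul,
    sq]

end Matrix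

theorem sqV_ne_zero (i : Fin 4) : sqV i ≠ 0 := fun h => by
  fin_cases i <;> simpa [sqV] using congrFun h 0

theorem sqW_ne_zero (j : Fin 4) : sqW j ≠ 0 := fun h => by
  fin_cases j <;> simpa [sqW] using congrFun h 0

theorem quarter_mul_sq_sqV_dotProduct_sqW (i j : Fin 4) :
    (1 / 4 : ℝ) * (sqV i ⬝ᵥ sqW j) ^ 2 =
      (!![(0:ℝ), 0, 1, 1; 0, 1, 1, 0; 1, 1, 0, 0; 1, 0, 0, 1]) i j := by
  fin_cases i <;> fin_cases j <;> norm_num [sqV, sqW, dotProduct, Fin.sum_univ_succ]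

/-- Explicit rank-one psd factorization of size 3 of the slack matrix of the square:
`A_i = v_i v_iᵀ`, `B_j = ¼ w_j w_jᵀ`. -/
theorem square_slack_psd_factorization :
    (∀ i, (vecMulVec (sqV i) (sqV i)).PosSemidef ∧
        (vecMulVec (sqV i) (sqV i)).rank = 1) ∧
    (∀ j, ((1 / 4 : ℝ) • vecMulVec (sqW j) (sqW j)).PosSemidef ∧
        ((1 / 4 : ℝ) • vecMulVec (sqW j) (sqW j)).rank = 1) ∧
    ∀ i j, (vecMulVec (sqV i) (sqV i) * ((1 / 4 : ℝ) • vecMulVec (sqW j) (sqW j))).trace =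
      (!![(0:ℝ), 0, 1, 1; 0, 1, 1, 0; 1, 1, 0, 0; 1, 0, 0, 1]) i j := by
  have quarter_mem_nonZeroDivisors : (1 / 4 : ℝ) ∈ nonZeroDivisors ℝ :=
    mem_nonZeroDivisors_of_ne_zero (by norm_num)
  refine ⟨fun i => ⟨posSemidef_vecMulVec_self _, rank_vecMulVec_eq_one (sqV_ne_zero i)
      (sqV_ne_zero i)⟩, fun j => ⟨(posSemidef_vecMulVec_self _).smul (by norm_num), ?_⟩,
    fun i j => ?_⟩
  · rw [rank_smul_of_mem_nonZeroDivisors _ quarter_mem_nonZeroDivisors]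
    exact rank_vecMulVec_eq_one (sqW_ne_zero j) (sqW_ne_zero j)
  · rw [Matrix.mul_smul, trace_smul, trace_vecMulVec_self_mul_vecMulVec_self, smul_eq_mul,
      quarter_mul_sq_sqV_dotProduct_sqW]
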